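/- Let 1 ≤ p ≤ n and identify ℝⁿ = ℝ^{n−p} × ℝ^p, writing v = (v_⊥, v_Y), and correspondingly ℝ^{n+1} = ℝ^{n−p+1} × ℝ^p. For every v ∈ ℝⁿ, write Θ_n(v) = (η, μ) with η ∈ ℝ^{n−p+1} and μ ∈ ℝ^p. Then η ≠ 0 and ( η/‖η‖ , (‖η‖, μ) ) = ( Θ_{n−p}(v_⊥) , Θ_p( (1+‖v_⊥‖²)^{-1/2}·v_Y ) ). In other words, under the splitting map (η,μ) ↦ (η/‖η‖, (‖η‖,μ)), the compactified space splits as a product in which the first factor is the spherical compactification of the quotient X/Y (the extension of the orthogonal projection v ↦ v_⊥) and the second factor is the spherical compactification of Y via the map χ(v) = (1+‖v_⊥‖²)^{-1/2} v_Y. -/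

import Mathlib

noncomputable section

/-- The euclidean norm on `ℝ^{m+1} = ℝ × ℝ^m`. -/
def eNorm {m : ℕ} (y : ℝ × EuclideanSpace ℝ (Fin m)) : ℝ :=
  Real.sqrt (y.1 ^ 2 + ‖y.2‖ ^ 2)

/-- The map `Θ_m(x) = (1+‖x‖²)^{-1/2}(1, x)` into the sphere `S^m ⊂ ℝ × ℝ^m`. -/
def thetaMap {m : ℕ} (x : EuclideanSpace ℝ (Fin m)) : ℝ × EuclideanSpace ℝ (Fin m) :=
  (Real.sqrt (1 + ‖x‖ ^ 2))⁻¹ • ((1 : ℝ), x)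

/-!
With `r = √(1 + ‖v_⊥‖²)` and `s = √(1 + ‖v_⊥‖² + ‖v_Y‖²)` we have `η = s⁻¹ (1, v_⊥)`, so
`‖η‖ = r / s > 0` and `η / ‖η‖` is the normalisation of `(1, v_⊥)`, which is `Θ(v_⊥)`.
For the second factor, `1 + ‖r⁻¹ v_Y‖² = s² / r²`, hence `Θ(r⁻¹ v_Y) = (r / s) (1, r⁻¹ v_Y)
= (‖η‖, μ)`.
-/

open Real

section

variable {m : ℕ}

theorem eNorm_smul (c : ℝ) (y : ℝ × EuclideanSpace ℝ (Fin m)) :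
    eNorm (c • y) = |c| * eNorm y := by
  simp only [eNorm, Prod.smul_fst, Prod.smul_snd, smul_eq_mul, norm_smul, mul_pow,
    Real.norm_eq_abs, sq_abs]
  rw [← mul_add, sqrt_mul (sq_nonneg _), sqrt_sq_eq_abs]

theorem eNorm_one_prod (x : EuclideanSpace ℝ (Fin m)) :
    eNorm ((1 : ℝ), x) = √(1 + ‖x‖ ^ 2) := by
  simp [eNorm]

theorem thetaMap_eq_inv_eNorm_smul (x : EuclideanSpace ℝ (Fin m)) :
    thetaMap x = (eNorm ((1 : ℝ), x))⁻¹ • ((1 : ℝ), x) := by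
  rw [eNorm_one_prod, thetaMap]

theorem inv_eNorm_smul_smul {c : ℝ} (hc : 0 < c) (y : ℝ × EuclideanSpace ℝ (Fin m)) :
    (eNorm (c • y))⁻¹ • c • y = (eNorm y)⁻¹ • y := by
  rw [eNorm_smul, abs_of_pos hc, smul_smul, mul_inv_rev, mul_assoc, inv_mul_cancel₀ hc.ne',
    mul_one]

end

theorem sqrt_one_add_norm_inv_sqrt_smul_sq {E : Type*} [NormedAddCommGroup E]
    [NormedSpace ℝ E] {t : ℝ} (ht : 0 ≤ t) (y : E) :
    √(1 + ‖(√(1 + t))⁻¹ • y‖ ^ 2) = √(1 + (t + ‖y‖ ^ 2)) / √(1 + t) := by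
  have ht1 : 0 < 1 + t := by linarith
  have hnorm : ‖(√(1 + t))⁻¹ • y‖ ^ 2 = ‖y‖ ^ 2 / (1 + t) := by
    rw [norm_smul, mul_pow, norm_inv, Real.norm_eq_abs, inv_pow, sq_abs, sq_sqrt ht1.le,
      inv_mul_eq_div]
  rw [hnorm, ← sqrt_div (by positivity)]
  congr 1
  field_simp
  ring

theorem statement8_general (n p : ℕ)
    (vperp : EuclideanSpace ℝ (Fin (n - p))) (vY : EuclideanSpace ℝ (Fin p))
    (η : ℝ × EuclideanSpace ℝ (Fin (n - p))) (μ : EuclideanSpace ℝ (Fin p))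
    (hη : η = (Real.sqrt (1 + (‖vperp‖ ^ 2 + ‖vY‖ ^ 2)))⁻¹ • ((1 : ℝ), vperp))
    (hμ : μ = (Real.sqrt (1 + (‖vperp‖ ^ 2 + ‖vY‖ ^ 2)))⁻¹ • vY) :
    η ≠ 0 ∧
    (eNorm η)⁻¹ • η = thetaMap vperp ∧
    ((eNorm η, μ) : ℝ × EuclideanSpace ℝ (Fin p)) =
      thetaMap ((Real.sqrt (1 + ‖vperp‖ ^ 2))⁻¹ • vY) := by
  set r := √(1 + ‖vperp‖ ^ 2) with hr_def
  set s := √(1 + (‖vperp‖ ^ 2 + ‖vY‖ ^ 2)) with hs_def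
  have hr : 0 < r := by positivity
  have hs : 0 < s := by positivity
  have hηnorm : eNorm η = r / s := by
    rw [hη, eNorm_smul, eNorm_one_prod, abs_of_pos (inv_pos.2 hs), inv_mul_eq_div]
  refine ⟨?_, ?_, ?_⟩
  · rw [hη]
    exact smul_ne_zero (inv_ne_zero hs.ne') (by simp)
  · rw [hη, inv_eNorm_smul_smul (inv_pos.2 hs), thetaMap_eq_inv_eNorm_smul]
  · rw [thetaMap, sqrt_one_add_norm_inv_sqrt_smul_sq (sq_nonneg _), ← hr_def, ← hs_def,
      hηnorm, hμ, inv_div]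
    ext1
    · simp
    · rw [Prod.smul_snd, smul_smul]
      field_simp

/-- Writing `ℝⁿ = ℝ^{n−p} × ℝ^p`, `v = (v_⊥, v_Y)`, and
`Θ_n(v) = (η, μ)` with `η ∈ ℝ^{n−p+1} = ℝ × ℝ^{n−p}` and `μ ∈ ℝ^p`, one has `η ≠ 0` and
`(η/‖η‖, (‖η‖, μ)) = (Θ_{n−p}(v_⊥), Θ_p((1+‖v_⊥‖²)^{-1/2}·v_Y))`: under the splitting
map `(η,μ) ↦ (η/‖η‖, (‖η‖,μ))` the compactification splits as a product of the
compactification of `X/Y` and the compactification of `Y`. -/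
theorem statement8 (n p : ℕ) (hp : 1 ≤ p) (hpn : p ≤ n)
    (vperp : EuclideanSpace ℝ (Fin (n - p))) (vY : EuclideanSpace ℝ (Fin p))
    (η : ℝ × EuclideanSpace ℝ (Fin (n - p))) (μ : EuclideanSpace ℝ (Fin p))
    (hη : η = (Real.sqrt (1 + (‖vperp‖ ^ 2 + ‖vY‖ ^ 2)))⁻¹ • ((1 : ℝ), vperp))
    (hμ : μ = (Real.sqrt (1 + (‖vperp‖ ^ 2 + ‖vY‖ ^ 2)))⁻¹ • vY) :
    η ≠ 0 ∧
    (eNorm η)⁻¹ • η = thetaMap vperp ∧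
    ((eNorm η, μ) : ℝ × EuclideanSpace ℝ (Fin p)) =
      thetaMap ((Real.sqrt (1 + ‖vperp‖ ^ 2))⁻¹ • vY) :=
  statement8_general n p vperp vY η μ hη hμ
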